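/- arXiv:2602.13056 — 2 statements merged into one kernel-verified Lean document; each statement's English description precedes it below -/
import Mathlib

section
/- Let a : ℝ → ℝ satisfy a(u) < 0 for all u, and let Δ > 0. For the update V' = e^{a(u)Δ} V + (b(u)/a(u))(e^{a(u)Δ} − 1) + ν ξ, where b : ℝ → ℝ, ν ∈ ℝ and ξ is arbitrary, one has |V'| ≤ e^{a(u)Δ}|V| + |b(u)| Δ + |ν||ξ|. In particular, if |a(u)| ≥ C_a > 0 and |b(u)| ≤ C_b, then |V'| ≤ e^{−C_a Δ}|V| + C_b Δ + |ν||ξ|. -/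
/-! On `x ≤ 0` the exponential is `1`-Lipschitz with `exp 0 = 1`, so `|(e^{aΔ} - 1) / a| ≤ Δ`;
the exact solution of `V' = aV + b` over a step of length `Δ` therefore contracts `V` by
`e^{aΔ}` and adds at most `|b| Δ`. The second bound then follows by monotonicity of `exp`. -/

open Real

lemma Real.abs_exp_sub_one_le_abs_of_nonpos {x : ℝ} (hx : x ≤ 0) : |exp x - 1| ≤ |x| := by
  rw [abs_of_nonpos (by simpa using exp_le_one_iff.mpr hx), abs_of_nonpos hx]
  linarith [add_one_le_exp x]

lemma abs_div_mul_exp_sub_one_le {a t : ℝ} (b : ℝ) (hat : a * t ≤ 0) :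
    |b / a * (exp (a * t) - 1)| ≤ |b| * |t| := by
  rcases eq_or_ne a 0 with rfl | ha
  · simp only [div_zero, zero_mul, abs_zero]; positivity
  calc |b / a * (exp (a * t) - 1)| = |b| / |a| * |exp (a * t) - 1| := by
        rw [abs_mul, abs_div]
    _ ≤ |b| / |a| * |a * t| :=
        mul_le_mul_of_nonneg_left (abs_exp_sub_one_le_abs_of_nonpos hat) (by positivity)
    _ = |b| * |t| := by rw [abs_mul]; field_simp

lemma abs_exp_mul_add_div_mul_exp_sub_one_add_le {a t : ℝ} (b V w : ℝ) (hat : a * t ≤ 0) :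
    |exp (a * t) * V + b / a * (exp (a * t) - 1) + w| ≤ exp (a * t) * |V| + |b| * |t| + |w| :=
  calc _ ≤ |exp (a * t) * V| + |b / a * (exp (a * t) - 1)| + |w| := abs_add_three _ _ _
    _ ≤ exp (a * t) * |V| + |b| * |t| + |w| := by
      rw [abs_mul, abs_of_pos (exp_pos _)]
      gcongr
      exact abs_div_mul_exp_sub_one_le b hat

/-- Lyapunov-type bound for the splitting update of the V-component. -/
theorem stmt_3 (a b : ℝ → ℝ) (ha : ∀ u, a u < 0) (Δ : ℝ) (hΔ : 0 < Δ)
    (u V ν ξ : ℝ) (V' : ℝ)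
    (hV' : V' = Real.exp (a u * Δ) * V + (b u / a u) * (Real.exp (a u * Δ) - 1) + ν * ξ) :
    |V'| ≤ Real.exp (a u * Δ) * |V| + |b u| * Δ + |ν| * |ξ|
    ∧ ∀ C_a C_b : ℝ, 0 < C_a → C_a ≤ |a u| → |b u| ≤ C_b →
        |V'| ≤ Real.exp (-C_a * Δ) * |V| + C_b * Δ + |ν| * |ξ| := by
  have hau := ha u
  have key : |V'| ≤ exp (a u * Δ) * |V| + |b u| * Δ + |ν| * |ξ| := by
    have := abs_exp_mul_add_div_mul_exp_sub_one_add_le (b u) V (ν * ξ)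
      (mul_nonpos_of_nonpos_of_nonneg hau.le hΔ.le)
    rwa [abs_of_pos hΔ, abs_mul ν, ← hV'] at this
  refine ⟨key, fun C_a C_b _ hCa hCb => key.trans ?_⟩
  have hau_le : a u ≤ -C_a := by rw [abs_of_neg hau] at hCa; linarith
  gcongr
end

section
/- Let α, β : ℝ → (0,∞) be continuous, let V : [0,s] → ℝ be continuous, and let u₀ ∈ [0,1]. Let U : [0,s] → ℝ solve U(t) = u₀ + ∫₀^t [−(α(V(r))+β(V(r)))U(r) + α(V(r))] dr. Then U(t) ∈ [0,1] for all t ∈ [0,s]. -/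
open MeasureTheory intervalIntegral Set

/-- pathwise invariance of [0,1] for a gating variable along a
fixed continuous voltage trajectory. -/
theorem stmt_7 (α β : ℝ → ℝ) (hα : ∀ v, 0 < α v) (hβ : ∀ v, 0 < β v)
    (hαc : Continuous α) (hβc : Continuous β)
    (s : ℝ) (hs : 0 ≤ s) (V : ℝ → ℝ) (hV : ContinuousOn V (Set.Icc 0 s))
    (u₀ : ℝ) (hu₀ : u₀ ∈ Set.Icc (0:ℝ) 1)
    (U : ℝ → ℝ)
    (hU : ∀ t ∈ Set.Icc 0 s,
      U t = u₀ + ∫ r in (0:ℝ)..t, (-(α (V r) + β (V r)) * U r + α (V r))) :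
    ∀ t ∈ Set.Icc 0 s, U t ∈ Set.Icc (0:ℝ) 1 := by
  -- Extend V continuously to all of ℝ
  set V' : ℝ → ℝ := Set.IccExtend hs ((Set.Icc (0:ℝ) s).restrict V) with hV'def
  have hV'c : Continuous V' :=
    Continuous.Icc_extend' (continuousOn_iff_continuous_restrict.mp hV)
  have hV'eq : ∀ r ∈ Set.Icc (0:ℝ) s, V' r = V r := fun r hr => by
    rw [hV'def, Set.IccExtend_of_mem hs _ hr]; rfl
  set a : ℝ → ℝ := fun r => α (V' r) with ha_def
  set c : ℝ → ℝ := fun r => α (V' r) + β (V' r) with hc_def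
  set g : ℝ → ℝ := fun r => -(c r) * U r + a r with hg_def
  have hac : Continuous a := hαc.comp hV'c
  have hcc : Continuous c := (hαc.comp hV'c).add (hβc.comp hV'c)
  have ha_pos : ∀ r, 0 < a r := fun r => hα _
  have hca_pos : ∀ r, 0 < c r - a r := fun r => by
    simp only [hc_def, ha_def]; have := hβ (V' r); linarith
  have hU' : ∀ τ ∈ Set.Icc 0 s, U τ = u₀ + ∫ r in (0:ℝ)..τ, g r := by
    intro τ hτ
    rw [hU τ hτ]
    congr 1
    apply intervalIntegral.integral_congr
    intro r hr
    rw [Set.uIcc_of_le hτ.1] at hr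
    have hr' : r ∈ Set.Icc (0:ℝ) s := Set.Icc_subset_Icc le_rfl hτ.2 hr
    simp only [hg_def, hc_def, ha_def, hV'eq r hr']
  -- the exponential integrating factor
  set E : ℝ → ℝ := fun x => Real.exp (∫ r in (0:ℝ)..x, c r) with hE_def
  have hEpos : ∀ x, 0 < E x := fun x => Real.exp_pos _
  have hEd : ∀ x, HasDerivAt E (E x * c x) x := by
    intro x
    have h1 : HasDerivAt (fun u => ∫ r in (0:ℝ)..u, c r) (c x) x :=
      (intervalIntegral.integral_hasStrictDerivAt_right
        (hcc.intervalIntegrable _ _) (hcc.stronglyMeasurableAtFilter _ _)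
        hcc.continuousAt).hasDerivAt
    exact h1.exp
  have hEc : Continuous E := by
    have : Differentiable ℝ E := fun x => (hEd x).differentiableAt
    exact this.continuous
  have hE0 : E 0 = 1 := by simp [hE_def]
  -- key invariance lemma on intervals where g is integrable
  have key : ∀ t₀, t₀ ∈ Set.Icc 0 s → IntervalIntegrable g volume 0 t₀ →
      ∀ τ ∈ Set.Icc (0:ℝ) t₀, U τ ∈ Set.Icc (0:ℝ) 1 := by
    intro t₀ ht₀ hint τ hτ
    have ht₀0 : (0:ℝ) ≤ t₀ := ht₀.1
    have hsub : Set.Icc (0:ℝ) t₀ ⊆ Set.Icc 0 s := Set.Icc_subset_Icc le_rfl ht₀.2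
    have huIcc : Set.uIcc (0:ℝ) t₀ = Set.Icc 0 t₀ := Set.uIcc_of_le ht₀0
    have hprim : ContinuousOn (fun x => ∫ r in (0:ℝ)..x, g r) (Set.Icc 0 t₀) := by
      have h := continuousOn_primitive_interval' hint
        (by rw [huIcc]; exact Set.left_mem_Icc.2 ht₀0)
      rwa [huIcc] at h
    have hUc : ContinuousOn U (Set.Icc 0 t₀) :=
      (continuousOn_const.add hprim).congr (fun y hy => hU' y (hsub hy))
    have hgc : ContinuousOn g (Set.Icc 0 t₀) :=
      ((hcc.continuousOn.neg.mul hUc).add hac.continuousOn)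
    -- derivative of U at interior points
    have hUd : ∀ x ∈ Set.Ioo (0:ℝ) t₀, HasDerivAt U (g x) x := by
      intro x hx
      have hmem : Set.Icc (0:ℝ) t₀ ∈ nhds x := Icc_mem_nhds hx.1 hx.2
      have hint' : IntervalIntegrable g volume 0 x := by
        apply hint.mono_set
        rw [huIcc, Set.uIcc_of_le hx.1.le]
        exact Set.Icc_subset_Icc le_rfl hx.2.le
      have hmeas : StronglyMeasurableAtFilter g (nhds x) volume :=
        (hgc.mono Set.Ioo_subset_Icc_self).stronglyMeasurableAtFilter isOpen_Ioo x hx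
      have hca : ContinuousAt g x := hgc.continuousAt hmem
      have hder := (intervalIntegral.integral_hasDerivAt_right hint' hmeas hca).const_add u₀
      exact hder.congr_of_eventuallyEq
        (Filter.eventuallyEq_of_mem hmem (fun y hy => hU' y (hsub hy)))
    -- monotonicity of U·E
    have hF1d : ∀ x ∈ Set.Ioo (0:ℝ) t₀,
        HasDerivAt (fun y => U y * E y) (a x * E x) x := by
      intro x hx
      have h := (hUd x hx).mul (hEd x)
      have heq : g x * E x + U x * (E x * c x) = a x * E x := by
        simp only [hg_def]; ring
      rwa [heq] at h
    have mono1 : MonotoneOn (fun y => U y * E y) (Set.Icc 0 t₀) := by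
      apply monotoneOn_of_deriv_nonneg (convex_Icc _ _) (hUc.mul hEc.continuousOn)
      · rw [interior_Icc]
        exact fun x hx => (hF1d x hx).differentiableAt.differentiableWithinAt
      · rw [interior_Icc]
        intro x hx
        change 0 ≤ deriv (fun y => U y * E y) x
        rw [(hF1d x hx).deriv]
        exact mul_nonneg (ha_pos x).le (hEpos x).le
    -- monotonicity of (1-U)·E
    have hF2d : ∀ x ∈ Set.Ioo (0:ℝ) t₀,
        HasDerivAt (fun y => (1 - U y) * E y) ((c x - a x) * E x) x := by
      intro x hx
      have h := ((hasDerivAt_const x (1:ℝ)).sub (hUd x hx)).mul (hEd x)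
      have heq : (0 - g x) * E x + (1 - U x) * (E x * c x) = (c x - a x) * E x := by
        simp only [hg_def]; ring
      have h' : HasDerivAt (fun y => (1 - U y) * E y) ((0 - g x) * E x + (1 - U x) * (E x * c x)) x := h
      rwa [heq] at h'
    have mono2 : MonotoneOn (fun y => (1 - U y) * E y) (Set.Icc 0 t₀) := by
      apply monotoneOn_of_deriv_nonneg (convex_Icc _ _)
        ((continuousOn_const.sub hUc).mul hEc.continuousOn)
      · rw [interior_Icc]
        exact fun x hx => (hF2d x hx).differentiableAt.differentiableWithinAt
      · rw [interior_Icc]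
        intro x hx
        change 0 ≤ deriv (fun y => (1 - U y) * E y) x
        rw [(hF2d x hx).deriv]
        exact mul_nonneg (hca_pos x).le (hEpos x).le
    have h0mem : (0:ℝ) ∈ Set.Icc (0:ℝ) t₀ := Set.left_mem_Icc.2 ht₀0
    have hU0 : U 0 = u₀ := by
      rw [hU' 0 (hsub h0mem)]; simp
    have h1 : u₀ ≤ U τ * E τ := by
      have := mono1 h0mem hτ hτ.1
      simpa [hU0, hE0] using this
    have h2 : 1 - u₀ ≤ (1 - U τ) * E τ := by
      have := mono2 h0mem hτ hτ.1
      simpa [hU0, hE0] using this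
    have hEτ := hEpos τ
    constructor
    · nlinarith [hu₀.1]
    · nlinarith [hu₀.2]
  -- conclude
  intro t ht
  by_cases hi : IntervalIntegrable g volume 0 t
  · exact key t ht hi t ⟨ht.1, le_refl t⟩
  · have h0 : (∫ r in (0:ℝ)..t, g r) = 0 := intervalIntegral.integral_undef hi
    rw [hU' t ht, h0, add_zero]
    exact hu₀
end
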